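/- Let φ_T(s,v) = T(s) × T*(s) + v·T(s) be the ruled surface associated to the dual tangent indicatrix, where T* = β_T × T and N* = β_N × N. Then for all (s,v) with κ(s)²(v − ⟨β_N(s),T(s)⟩)² + κ*(s)² ≠ 0, the point φ_T(s,v) is a regular point of φ_T and its Gaussian curvature is K_T(s,v) = −κ(s)²κ*(s)² / (κ(s)²(v − ⟨β_N(s),T(s)⟩)² + κ*(s)²)². -/

import Mathlib

open Matrix

noncomputable section

/-- Cross product on ℝ³ (as `Fin 3 → ℝ`). -/
def cross3 (a b : Fin 3 → ℝ) : Fin 3 → ℝ := crossProduct a b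

/-- Euclidean norm on ℝ³ (as `Fin 3 → ℝ`). -/
noncomputable def enorm3 (a : Fin 3 → ℝ) : ℝ := Real.sqrt (a ⬝ᵥ a)

/-- A dual Frenet apparatus: smooth maps `T, N, B, T*, N*, B* : ℝ → ℝ³` and smooth
functions `κ, τ, κ*, τ* : ℝ → ℝ` such that `{T, N, B}` is orthonormal with `B = T × N`,
the real Frenet equations hold, and the dual-part Frenet equations hold. -/
structure DualFrenetApparatus where
  T : ℝ → Fin 3 → ℝ
  N : ℝ → Fin 3 → ℝ
  B : ℝ → Fin 3 → ℝ
  Tstar : ℝ → Fin 3 → ℝ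
  Nstar : ℝ → Fin 3 → ℝ
  Bstar : ℝ → Fin 3 → ℝ
  kappa : ℝ → ℝ
  tau : ℝ → ℝ
  kappaStar : ℝ → ℝ
  tauStar : ℝ → ℝ
  smooth_T : ContDiff ℝ (⊤ : ℕ∞) T
  smooth_N : ContDiff ℝ (⊤ : ℕ∞) N
  smooth_B : ContDiff ℝ (⊤ : ℕ∞) B
  smooth_Tstar : ContDiff ℝ (⊤ : ℕ∞) Tstar
  smooth_Nstar : ContDiff ℝ (⊤ : ℕ∞) Nstar
  smooth_Bstar : ContDiff ℝ (⊤ : ℕ∞) Bstar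
  smooth_kappa : ContDiff ℝ (⊤ : ℕ∞) kappa
  smooth_tau : ContDiff ℝ (⊤ : ℕ∞) tau
  smooth_kappaStar : ContDiff ℝ (⊤ : ℕ∞) kappaStar
  smooth_tauStar : ContDiff ℝ (⊤ : ℕ∞) tauStar
  unit_T : ∀ s, T s ⬝ᵥ T s = 1
  unit_N : ∀ s, N s ⬝ᵥ N s = 1
  unit_B : ∀ s, B s ⬝ᵥ B s = 1
  orth_TN : ∀ s, T s ⬝ᵥ N s = 0
  orth_TB : ∀ s, T s ⬝ᵥ B s = 0
  orth_NB : ∀ s, N s ⬝ᵥ B s = 0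
  B_eq : ∀ s, B s = cross3 (T s) (N s)
  frenet_T : ∀ s, deriv T s = kappa s • N s
  frenet_N : ∀ s, deriv N s = (-(kappa s)) • T s + tau s • B s
  frenet_B : ∀ s, deriv B s = (-(tau s)) • N s
  frenet_Tstar : ∀ s, deriv Tstar s = kappa s • Nstar s + kappaStar s • N s
  frenet_Nstar : ∀ s, deriv Nstar s =
    (-(kappa s)) • Tstar s + (-(kappaStar s)) • T s + tau s • Bstar s + tauStar s • B s
  frenet_Bstar : ∀ s, deriv Bstar s = (-(tau s)) • Nstar s + (-(tauStar s)) • N s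

/-- Partial derivative of a parametrized surface with respect to the first parameter. -/
noncomputable def phiS (φ : ℝ → ℝ → Fin 3 → ℝ) (s v : ℝ) : Fin 3 → ℝ :=
  deriv (fun t => φ t v) s

/-- Partial derivative with respect to the second parameter. -/
noncomputable def phiV (φ : ℝ → ℝ → Fin 3 → ℝ) (s v : ℝ) : Fin 3 → ℝ :=
  deriv (φ s) v

noncomputable def phiSS (φ : ℝ → ℝ → Fin 3 → ℝ) (s v : ℝ) : Fin 3 → ℝ :=
  deriv (fun t => phiS φ t v) s

noncomputable def phiSV (φ : ℝ → ℝ → Fin 3 → ℝ) (s v : ℝ) : Fin 3 → ℝ :=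
  deriv (fun w => phiS φ s w) v

noncomputable def phiVV (φ : ℝ → ℝ → Fin 3 → ℝ) (s v : ℝ) : Fin 3 → ℝ :=
  deriv (fun w => phiV φ s w) v

/-- `(s, v)` is a regular point of `φ` if `φ_s × φ_v ≠ 0` there. -/
def IsRegularPoint (φ : ℝ → ℝ → Fin 3 → ℝ) (s v : ℝ) : Prop :=
  cross3 (phiS φ s v) (phiV φ s v) ≠ 0

/-- The unit normal `n = (φ_v × φ_s) / ‖φ_v × φ_s‖`. -/
noncomputable def unitNormal (φ : ℝ → ℝ → Fin 3 → ℝ) (s v : ℝ) : Fin 3 → ℝ :=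
  (enorm3 (cross3 (phiV φ s v) (phiS φ s v)))⁻¹ • cross3 (phiV φ s v) (phiS φ s v)

/-- Gaussian curvature `K = (eg − f²)/(EG − F²)`. -/
noncomputable def GaussK (φ : ℝ → ℝ → Fin 3 → ℝ) (s v : ℝ) : ℝ :=
  (phiSS φ s v ⬝ᵥ unitNormal φ s v * (phiVV φ s v ⬝ᵥ unitNormal φ s v) -
      (phiSV φ s v ⬝ᵥ unitNormal φ s v) ^ 2) /
    (phiS φ s v ⬝ᵥ phiS φ s v * (phiV φ s v ⬝ᵥ phiV φ s v) -
      (phiS φ s v ⬝ᵥ phiV φ s v) ^ 2)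

/-- Mean curvature (trace of the shape operator) `H = (eG − 2fF + gE)/(EG − F²)`. -/
noncomputable def MeanH (φ : ℝ → ℝ → Fin 3 → ℝ) (s v : ℝ) : ℝ :=
  (phiSS φ s v ⬝ᵥ unitNormal φ s v * (phiV φ s v ⬝ᵥ phiV φ s v) -
      2 * (phiSV φ s v ⬝ᵥ unitNormal φ s v) * (phiS φ s v ⬝ᵥ phiV φ s v) +
      phiVV φ s v ⬝ᵥ unitNormal φ s v * (phiS φ s v ⬝ᵥ phiS φ s v)) /
    (phiS φ s v ⬝ᵥ phiS φ s v * (phiV φ s v ⬝ᵥ phiV φ s v) -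
      (phiS φ s v ⬝ᵥ phiV φ s v) ^ 2)

/-- The ruled surface `φ_X(s,v) = X(s) × X*(s) + v·X(s)`. -/
noncomputable def ruled (X Xstar : ℝ → Fin 3 → ℝ) : ℝ → ℝ → Fin 3 → ℝ :=
  fun s v => cross3 (X s) (Xstar s) + v • X s


section Helpers

lemma cross3_cross3 (x y z : Fin 3 → ℝ) :
    cross3 x (cross3 y z) = (x ⬝ᵥ z) • y - (x ⬝ᵥ y) • z := by
  funext i; fin_cases i <;> simp [cross3, cross_apply, dotProduct, Fin.sum_univ_three] <;> ring

lemma cross3_add_right (x y z : Fin 3 → ℝ) :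
    cross3 x (y + z) = cross3 x y + cross3 x z := by
  funext i; fin_cases i <;> simp [cross3, cross_apply] <;> ring

lemma cross3_smul_right (r : ℝ) (x y : Fin 3 → ℝ) :
    cross3 x (r • y) = r • cross3 x y := by
  funext i; fin_cases i <;> simp [cross3, cross_apply] <;> ring

lemma cross3_smul_left (r : ℝ) (x y : Fin 3 → ℝ) :
    cross3 (r • x) y = r • cross3 x y := by
  funext i; fin_cases i <;> simp [cross3, cross_apply] <;> ring

lemma cross3_self' (x : Fin 3 → ℝ) : cross3 x x = 0 := cross_self x

lemma cross3_anticomm' (x y : Fin 3 → ℝ) : cross3 x y = -(cross3 y x) := by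
  funext i; fin_cases i <;> simp [cross3, cross_apply] <;> ring

lemma hasDerivAt_cross3 {f g : ℝ → Fin 3 → ℝ} {f' g' : Fin 3 → ℝ} {x : ℝ}
    (hf : HasDerivAt f f' x) (hg : HasDerivAt g g' x) :
    HasDerivAt (fun t => cross3 (f t) (g t)) (cross3 f' (g x) + cross3 (f x) g') x := by
  rw [hasDerivAt_pi] at hf hg ⊢
  intro i
  fin_cases i <;> simp only [cross3, cross_apply, Pi.add_apply, Fin.zero_eta, Fin.mk_one,
    Matrix.cons_val_zero, Matrix.cons_val_one, Matrix.head_cons, Matrix.cons_val_two,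
    Matrix.tail_cons, Fin.isValue]
  · exact (((hf 1).mul (hg 2)).sub ((hf 2).mul (hg 1))).congr_deriv (by ring)
  · exact (((hf 2).mul (hg 0)).sub ((hf 0).mul (hg 2))).congr_deriv (by ring)
  · exact (((hf 0).mul (hg 1)).sub ((hf 1).mul (hg 0))).congr_deriv (by simp; ring)

end Helpers

/-- The ruled surface associated to the dual tangent indicatrix is regular wherever
`κ²(v − ⟨β_N,T⟩)² + κ*² ≠ 0`, and its Gaussian curvature there is
`K_T = −κ²κ*² / (κ²(v − ⟨β_N,T⟩)² + κ*²)²`. -/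
theorem gauss_curvature_tangent_indicatrix (F : DualFrenetApparatus)
    (βT βN : ℝ → Fin 3 → ℝ)
    (hβT : ContDiff ℝ (⊤ : ℕ∞) βT) (hβN : ContDiff ℝ (⊤ : ℕ∞) βN)
    (hTstar : ∀ s, F.Tstar s = cross3 (βT s) (F.T s))
    (hNstar : ∀ s, F.Nstar s = cross3 (βN s) (F.N s)) :
    ∀ s v : ℝ,
      F.kappa s ^ 2 * (v - βN s ⬝ᵥ F.T s) ^ 2 + F.kappaStar s ^ 2 ≠ 0 →
      IsRegularPoint (ruled F.T F.Tstar) s v ∧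
      GaussK (ruled F.T F.Tstar) s v =
        -(F.kappa s ^ 2 * F.kappaStar s ^ 2) /
          (F.kappa s ^ 2 * (v - βN s ⬝ᵥ F.T s) ^ 2 + F.kappaStar s ^ 2) ^ 2 := by
  intro s v hne
  set k := F.kappa s with hk
  set m := F.kappaStar s with hm
  set c := βN s ⬝ᵥ F.T s with hc
  have hT' : HasDerivAt F.T (k • F.N s) s := by
    have h := ((F.smooth_T.differentiable (by simp)) s).hasDerivAt
    rwa [F.frenet_T s] at h
  have hTs' : HasDerivAt F.Tstar (k • F.Nstar s + m • F.N s) s := by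
    have h := ((F.smooth_Tstar.differentiable (by simp)) s).hasDerivAt
    rwa [F.frenet_Tstar s] at h
  set φ := ruled F.T F.Tstar with hφ
  set A : Fin 3 → ℝ :=
    cross3 (k • F.N s) (F.Tstar s) + cross3 (F.T s) (k • F.Nstar s + m • F.N s) with hA
  have hPS : ∀ w : ℝ, phiS φ s w = A + w • (k • F.N s) := by
    intro w
    have h : HasDerivAt (fun t => cross3 (F.T t) (F.Tstar t) + w • F.T t)
        (A + w • (k • F.N s)) s :=
      (hasDerivAt_cross3 hT' hTs').add (hT'.const_smul w)
    exact h.deriv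
  have hPV : ∀ w : ℝ, phiV φ s w = F.T s := by
    intro w
    have h : HasDerivAt (fun u : ℝ => cross3 (F.T s) (F.Tstar s) + u • F.T s) (F.T s) w := by
      exact ((hasDerivAt_const w (cross3 (F.T s) (F.Tstar s))).add
        ((hasDerivAt_id w).smul_const (F.T s))).congr_deriv (by simp)
    exact h.deriv
  have hPSV : phiSV φ s v = k • F.N s := by
    have he : (fun w => phiS φ s w) = fun w => A + w • (k • F.N s) := funext hPS
    rw [phiSV, he]
    have h : HasDerivAt (fun u : ℝ => A + u • (k • F.N s)) (k • F.N s) v := by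
      exact ((hasDerivAt_const v A).add ((hasDerivAt_id v).smul_const (k • F.N s))).congr_deriv (by simp)
    exact h.deriv
  have hPVV : phiVV φ s v = 0 := by
    have he : (fun w => phiV φ s w) = fun _ => F.T s := funext hPV
    rw [phiVV, he, deriv_const]
  have hTT := F.unit_T s; have hNN := F.unit_N s; have hBB := F.unit_B s
  have hTN := F.orth_TN s; have hTB := F.orth_TB s; have hNB := F.orth_NB s
  have hNT : F.N s ⬝ᵥ F.T s = 0 := by rw [dotProduct_comm]; exact hTN
  have hBT : F.B s ⬝ᵥ F.T s = 0 := by rw [dotProduct_comm]; exact hTB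
  have hBN : F.B s ⬝ᵥ F.N s = 0 := by rw [dotProduct_comm]; exact hNB
  set a : ℝ := -(k * (F.N s ⬝ᵥ βT s)) with ha
  set b : ℝ := k * (v - c) with hb
  have h1 : cross3 (F.N s) (cross3 (βT s) (F.T s)) = (0:ℝ) • βT s - (F.N s ⬝ᵥ βT s) • F.T s := by
    rw [cross3_cross3, hNT]
  have h2 : cross3 (F.T s) (cross3 (βN s) (F.N s)) = (0:ℝ) • βN s - (F.T s ⬝ᵥ βN s) • F.N s := by
    rw [cross3_cross3, hTN]
  have h3 : cross3 (F.T s) (F.N s) = F.B s := (F.B_eq s).symm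
  have hcc : F.T s ⬝ᵥ βN s = c := dotProduct_comm _ _
  have hP : phiS φ s v = a • F.T s + b • F.N s + m • F.B s := by
    rw [hPS v, hA, hTstar s, hNstar s]
    simp only [cross3_smul_left, cross3_add_right, cross3_smul_right]
    rw [h1, h2, h3, hcc, ha, hb]
    module
  have hTB' : cross3 (F.T s) (F.B s) = -(F.N s) := by
    rw [F.B_eq s, cross3_cross3, hTN, hTT]
    module
  have hY : cross3 (F.T s) (phiS φ s v) = b • F.B s + (-m) • F.N s := by
    rw [hP, cross3_add_right, cross3_add_right, cross3_smul_right, cross3_smul_right,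
      cross3_smul_right, cross3_self', h3, hTB']
    module
  have hYY : (b • F.B s + (-m) • F.N s) ⬝ᵥ (b • F.B s + (-m) • F.N s) = b ^ 2 + m ^ 2 := by
    simp only [add_dotProduct, dotProduct_add, smul_dotProduct, dotProduct_smul,
      hBB, hNN, hBN, hNB, smul_eq_mul]
    ring
  have hbm : b ^ 2 + m ^ 2 = k ^ 2 * (v - c) ^ 2 + m ^ 2 := by rw [hb]; ring
  have hne' : b ^ 2 + m ^ 2 ≠ 0 := by rw [hbm]; exact hne
  have hpos : 0 < b ^ 2 + m ^ 2 := lt_of_le_of_ne (by positivity) (Ne.symm hne')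
  constructor
  · intro h0
    have hanti : cross3 (F.T s) (phiS φ s v) = 0 := by
      rw [cross3_anticomm' (F.T s) (phiS φ s v)]
      rw [hPV v] at h0
      rw [h0, neg_zero]
    rw [hY] at hanti
    apply hne'
    rw [← hYY, hanti, dotProduct_zero]
  · have hNorm : unitNormal φ s v = (Real.sqrt (b ^ 2 + m ^ 2))⁻¹ • (b • F.B s + (-m) • F.N s) := by
      rw [unitNormal, hPV v, hY, enorm3, hYY]
    have e2 : phiVV φ s v ⬝ᵥ unitNormal φ s v = 0 := by rw [hPVV]; exact zero_dotProduct _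
    have e3 : phiSV φ s v ⬝ᵥ unitNormal φ s v = (Real.sqrt (b ^ 2 + m ^ 2))⁻¹ * (-(k * m)) := by
      rw [hPSV, hNorm]
      simp only [smul_dotProduct, dotProduct_smul, dotProduct_add, add_dotProduct,
        hNN, hNB, hBN, hBB, hTT, hTN, hNT, hTB, hBT, smul_eq_mul]
      ring
    have e4 : phiS φ s v ⬝ᵥ phiS φ s v = a ^ 2 + b ^ 2 + m ^ 2 := by
      rw [hP]
      simp only [add_dotProduct, dotProduct_add, smul_dotProduct, dotProduct_smul,
        hNN, hNB, hBN, hBB, hTT, hTN, hNT, hTB, hBT, smul_eq_mul]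
      ring
    have e5 : phiV φ s v ⬝ᵥ phiV φ s v = 1 := by rw [hPV v]; exact hTT
    have e6 : phiS φ s v ⬝ᵥ phiV φ s v = a := by
      rw [hP, hPV v]
      simp only [add_dotProduct, smul_dotProduct, hTT, hNT, hBT, smul_eq_mul]
      ring
    have hsq : Real.sqrt (b ^ 2 + m ^ 2) ^ 2 = b ^ 2 + m ^ 2 := Real.sq_sqrt (le_of_lt hpos)
    have hsqne : Real.sqrt (b ^ 2 + m ^ 2) ≠ 0 := by
      intro h
      rw [← hsq, h] at hne'
      simp at hne'
    rw [GaussK, e2, e3, e4, e5, e6, mul_zero, zero_sub]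
    rw [mul_pow, inv_pow, hsq]
    have hden : (a ^ 2 + b ^ 2 + m ^ 2) * 1 - a ^ 2 = b ^ 2 + m ^ 2 := by ring
    rw [hden, ← hbm]
    field_simp


end
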